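/- arXiv:1912.10530 — 4 statements merged into one kernel-verified Lean document; each statement's English description precedes it below -/
import Mathlib

section
/- Let T̃ admit an eigendecomposition T̃ = Q D Q^{-1} with spectral radius σ̃, and let T̂ satisfy T̂² = 0 and T̃ T̂ = 0. If u - u_{k+1} = (T̃ + T̂)(u - u_k) for all k, then ‖u - u_{k+1}‖ ≤ (σ̃^{k+1} + σ̃^k ‖T̂‖) ‖Q‖ ‖Q^{-1}‖ ‖u - u_0‖. -/
/-!
In the `ℓ²` operator norm on matrices, the hypotheses `T̃ T̂ = 0` and
`T̂² = 0` collapse the binomial expansion to `(T̃ + T̂)^(k+1) = T̃^(k+1) + T̂ T̃^k`, so the error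
after `k + 1` steps is bounded by `‖T̃^(k+1)‖ + ‖T̂‖ ‖T̃^k‖`. Since `T̃^m = Q D^m Q⁻¹` and the
norm of the diagonal matrix `D^m` is the largest modulus of its entries, `‖T̃^m‖ ≤ σ̃^m ‖Q‖ ‖Q⁻¹‖`.
-/

open scoped Matrix.Norms.L2Operator

theorem add_pow_succ_of_mul_eq_zero {R : Type*} [Semiring R] {a b : R} (hab : a * b = 0)
    (hb : b * b = 0) (k : ℕ) : (a + b) ^ (k + 1) = a ^ (k + 1) + b * a ^ k := by
  induction k with
  | zero => simp
  | succ k ih =>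
    rw [pow_succ', ih, add_mul, mul_add, mul_add, ← mul_assoc a b, hab, ← mul_assoc b b, hb]
    simp only [zero_mul, add_zero, ← pow_succ']

theorem eq_pow_apply_of_forall_succ {F α : Type*} [FunLike F α α] [Monoid F]
    [IsOneApplyEqSelf F α] [IsMulApplyEqComp F α] (f : F) {e : ℕ → α}
    (he : ∀ k, e (k + 1) = f (e k)) (k : ℕ) : e k = (f ^ k) (e 0) := by
  induction k with
  | zero => rw [pow_zero, one_apply_eq_self]
  | succ k ih => rw [he, ih, pow_succ', mul_apply_eq_comp]

theorem Units.norm_conj_pow_le {R : Type*} [NormedRing R] (u : Rˣ) (x : R) (m : ℕ) :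
    ‖((u : R) * x * ↑u⁻¹) ^ m‖ ≤ ‖x ^ m‖ * ‖(u : R)‖ * ‖(↑u⁻¹ : R)‖ := by
  rw [Units.conj_pow]
  exact (norm_mul₃_le ..).trans_eq (by ring)

namespace Matrix

variable {ι 𝕜 : Type*} [Fintype ι] [DecidableEq ι] [RCLike 𝕜]

theorem l2_opNorm_diagonal_pow_le {d : ι → 𝕜} {σ : ℝ} (hσ : 0 ≤ σ) (hd : ∀ i, ‖d i‖ ≤ σ)
    (m : ℕ) : ‖diagonal d ^ m‖ ≤ σ ^ m := by
  rw [diagonal_pow, l2_opNorm_diagonal, pi_norm_le_iff_of_nonneg (by positivity)]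
  intro i
  rw [Pi.pow_apply, norm_pow]
  exact pow_le_pow_left₀ (norm_nonneg _) (hd i) m

theorem l2_opNorm_conj_diagonal_pow_le (u : (Matrix ι ι 𝕜)ˣ) {d : ι → 𝕜} {σ : ℝ} (hσ : 0 ≤ σ)
    (hd : ∀ i, ‖d i‖ ≤ σ) (m : ℕ) :
    ‖((u : Matrix ι ι 𝕜) * diagonal d * (↑u⁻¹ : Matrix ι ι 𝕜)) ^ m‖ ≤
      σ ^ m * ‖(u : Matrix ι ι 𝕜)‖ * ‖(↑u⁻¹ : Matrix ι ι 𝕜)‖ :=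
  (u.norm_conj_pow_le _ m).trans (by grw [l2_opNorm_diagonal_pow_le hσ hd m])

end Matrix

/-- If `T̃ = Q D Q⁻¹` with `D` diagonal with entries of modulus at most `σ̃`,
`T̂² = 0`, `T̃ T̂ = 0`, and `u - u_{k+1} = (T̃ + T̂)(u - u_k)`, then
`‖u - u_{k+1}‖ ≤ (σ̃^{k+1} + σ̃^k ‖T̂‖) ‖Q‖ ‖Q⁻¹‖ ‖u - u_0‖`. -/
theorem stmt_6 {n : ℕ}
    (Ttil That Q Qinv : Matrix (Fin n) (Fin n) ℝ) (d : Fin n → ℝ)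
    (hQ : Q * Qinv = 1) (hQ' : Qinv * Q = 1)
    (hTtil : Ttil = Q * Matrix.diagonal d * Qinv)
    (σ : ℝ) (hσ : ∀ i, |d i| ≤ σ)
    (hThat2 : That * That = 0) (hTtilThat : Ttil * That = 0)
    (ubar : EuclideanSpace ℝ (Fin n)) (u : ℕ → EuclideanSpace ℝ (Fin n))
    (hrec : ∀ k : ℕ,
      ubar - u (k + 1) = Matrix.toEuclideanCLM (𝕜 := ℝ) (Ttil + That) (ubar - u k)) :
    ∀ k : ℕ,
      ‖ubar - u (k + 1)‖ ≤
        (σ ^ (k + 1) + σ ^ k * ‖Matrix.toEuclideanCLM (𝕜 := ℝ) That‖) *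
          ‖Matrix.toEuclideanCLM (𝕜 := ℝ) Q‖ *
          ‖Matrix.toEuclideanCLM (𝕜 := ℝ) Qinv‖ * ‖ubar - u 0‖ := by
  intro k
  simp only [Matrix.l2_opNorm_toEuclideanCLM]
  rcases isEmpty_or_nonempty (Fin n) with _ | _
  · simp [Subsingleton.elim (ubar - u (k + 1)) 0, Subsingleton.elim (ubar - u 0) 0]
  have hσ0 : 0 ≤ σ := (abs_nonneg _).trans (hσ (Classical.arbitrary _))
  have hTtil_pow (m : ℕ) : ‖Ttil ^ m‖ ≤ σ ^ m * ‖Q‖ * ‖Qinv‖ := by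
    rw [hTtil]
    exact Matrix.l2_opNorm_conj_diagonal_pow_le ⟨Q, Qinv, hQ, hQ'⟩ hσ0 hσ m
  calc ‖ubar - u (k + 1)‖
      = ‖Matrix.toEuclideanCLM (𝕜 := ℝ) ((Ttil + That) ^ (k + 1)) (ubar - u 0)‖ := by
        rw [map_pow]
        exact congrArg norm (eq_pow_apply_of_forall_succ (e := fun j ↦ ubar - u j) _ hrec (k + 1))
    _ ≤ ‖(Ttil + That) ^ (k + 1)‖ * ‖ubar - u 0‖ := ContinuousLinearMap.le_opNorm _ _
    _ ≤ (‖Ttil ^ (k + 1)‖ + ‖That‖ * ‖Ttil ^ k‖) * ‖ubar - u 0‖ := by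
        rw [add_pow_succ_of_mul_eq_zero hTtilThat hThat2]
        gcongr
        exact (norm_add_le _ _).trans (by gcongr; exact norm_mul_le _ _)
    _ ≤ (σ ^ (k + 1) * ‖Q‖ * ‖Qinv‖ + ‖That‖ * (σ ^ k * ‖Q‖ * ‖Qinv‖)) * ‖ubar - u 0‖ := by
        gcongr <;> exact hTtil_pow _
    _ = (σ ^ (k + 1) + σ ^ k * ‖That‖) * ‖Q‖ * ‖Qinv‖ * ‖ubar - u 0‖ := by ring
end

section
/- Let A ∈ ℝ^{n×n} be a symmetric pentadiagonal Toeplitz matrix with diagonal entries 2(k₁+k₂), first off-diagonal entries -k₁, and second off-diagonal entries -k₂, where k₁ > 0, k₂ < 0 and k₁ + 4k₂ > 0. Then A is positive definite. -/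
/-!
Extend `x` by zero to a finitely supported sequence `v` on `ℤ`. Then `A = k₁ L₁ + k₂ L₂`, where
`Lₘ` is the Dirichlet Laplacian with step `m`, whose quadratic form is `Dₘ = ∑ₖ (v (k + m) - v k)²`.
Since `v (k + 2) - v k` is the sum of two consecutive one-step differences, `D₂ ≤ 4 D₁`, so as
`k₂ < 0` we get `xᵀ A x = k₁ D₁ + k₂ D₂ ≥ (k₁ + 4 k₂) D₁`; and `D₁ > 0` because a nonzero
finitely supported sequence is not constant.
-/

open Function Matrix

section FiniteSupport

variable {v : ℤ → ℝ}

theorem finsum_comp_add_right (f : ℤ → ℝ) (m : ℤ) : ∑ᶠ k, f (k + m) = ∑ᶠ k, f k :=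
  finsum_comp_equiv (Equiv.addRight m)

@[fun_prop]
theorem Function.HasFiniteSupport.sq (hv : v.HasFiniteSupport) :
    (fun k => v k ^ 2).HasFiniteSupport :=
  hv.fun_comp (g := (· ^ 2)) (by simp)

theorem finsum_sq_sub_comp_add (hv : v.HasFiniteSupport) (m : ℤ) :
    ∑ᶠ k, (v (k + m) - v k) ^ 2 = 2 * ∑ᶠ k, v k ^ 2 - 2 * ∑ᶠ k, v k * v (k + m) := by
  calc ∑ᶠ k, (v (k + m) - v k) ^ 2
      = ∑ᶠ k, (v (k + m) ^ 2 + v k ^ 2 - 2 * (v k * v (k + m))) := by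
        congr 1; ext k; ring
    _ = ∑ᶠ k, v (k + m) ^ 2 + ∑ᶠ k, v k ^ 2 - ∑ᶠ k, 2 * (v k * v (k + m)) := by
        rw [finsum_sub_distrib (by fun_prop (disch := exact add_left_injective _))
            (by fun_prop (disch := exact add_left_injective _)),
          finsum_add_distrib (by fun_prop (disch := exact add_left_injective _)) (by fun_prop)]
    _ = 2 * ∑ᶠ k, v k ^ 2 - 2 * ∑ᶠ k, v k * v (k + m) := by
        rw [finsum_comp_add_right (fun k => v k ^ 2), ← mul_finsum]; ring

theorem finsum_sq_add_comp_add_one_le {w : ℤ → ℝ} (hw : w.HasFiniteSupport) :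
    ∑ᶠ k, (w (k + 1) + w k) ^ 2 ≤ 4 * ∑ᶠ k, w k ^ 2 := by
  calc ∑ᶠ k, (w (k + 1) + w k) ^ 2
      ≤ ∑ᶠ k, (2 * w (k + 1) ^ 2 + 2 * w k ^ 2) :=
        finsum_le_finsum' (by fun_prop (disch := exact add_left_injective _))
          (by fun_prop (disch := exact add_left_injective _)) fun k => by
            linarith [add_sq_le (a := w (k + 1)) (b := w k)]
    _ = 4 * ∑ᶠ k, w k ^ 2 := by
        rw [finsum_add_distrib (by fun_prop (disch := exact add_left_injective _)) (by fun_prop),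
          ← mul_finsum, ← mul_finsum, finsum_comp_add_right (fun k => w k ^ 2)]
        ring

theorem finsum_sq_sub_comp_add_two_le (hv : v.HasFiniteSupport) :
    ∑ᶠ k, (v (k + 2) - v k) ^ 2 ≤ 4 * ∑ᶠ k, (v (k + 1) - v k) ^ 2 := by
  calc ∑ᶠ k, (v (k + 2) - v k) ^ 2
      = ∑ᶠ k, ((v (k + 1 + 1) - v (k + 1)) + (v (k + 1) - v k)) ^ 2 :=
        finsum_congr fun k => by ring_nf
    _ ≤ 4 * ∑ᶠ k, (v (k + 1) - v k) ^ 2 :=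
        finsum_sq_add_comp_add_one_le (w := fun k => v (k + 1) - v k)
          (by fun_prop (disch := exact add_left_injective _))

theorem eq_zero_of_hasFiniteSupport_of_comp_add_one (hv : v.HasFiniteSupport)
    (hconst : ∀ k, v (k + 1) = v k) : v = 0 := by
  have hv_eq : ∀ k, v k = v 0 := fun k => by
    induction k using Int.induction_on with
    | zero => rfl
    | succ k ih => rw [hconst, ih]
    | pred k ih => rw [← ih, ← hconst, sub_add_cancel]
  by_contra hne
  have hv0 : v 0 ≠ 0 := fun h => hne (funext fun k => by rw [hv_eq, h, Pi.zero_apply])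
  refine Set.infinite_univ (α := ℤ) (hv.subset fun k _ => ?_)
  rw [mem_support, hv_eq]
  exact hv0

theorem finsum_sq_sub_comp_add_one_pos (hv : v.HasFiniteSupport) (hv0 : v ≠ 0) :
    0 < ∑ᶠ k, (v (k + 1) - v k) ^ 2 := by
  have hjump : ∃ k, v (k + 1) ≠ v k := by
    by_contra! h
    exact hv0 (eq_zero_of_hasFiniteSupport_of_comp_add_one hv h)
  obtain ⟨k, hk⟩ := hjump
  exact finsum_pos (fun _ => sq_nonneg _) ⟨k, pow_two_pos_of_ne_zero (sub_ne_zero.2 hk)⟩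
    (by fun_prop (disch := exact add_left_injective _))

end FiniteSupport

section ExtendByZero

variable {n : ℕ} (x : Fin n → ℝ)

noncomputable def extendByZero : ℤ → ℝ :=
  extend (fun j : Fin n => (j : ℤ)) x 0

theorem natCast_injective_fin : Injective (fun j : Fin n => (j : ℤ)) :=
  Nat.cast_injective.comp Fin.val_injective

@[simp]
theorem extendByZero_natCast (j : Fin n) : extendByZero x j = x j :=
  natCast_injective_fin.extend_apply x 0 j

theorem hasFiniteSupport_extendByZero : (extendByZero x).HasFiniteSupport := by
  refine (Set.finite_range (fun j : Fin n => (j : ℤ))).subset fun k hk => ?_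
  by_contra h
  exact hk (extend_apply' _ _ _ h)

theorem extendByZero_ne_zero {x : Fin n → ℝ} (hx : x ≠ 0) : extendByZero x ≠ 0 := by
  obtain ⟨j, hj⟩ := ne_iff.1 hx
  exact ne_iff.2 ⟨j, by simpa using hj⟩

theorem sum_ite_natCast_eq_extendByZero (k : ℤ) :
    ∑ j : Fin n, (if (j : ℤ) = k then x j else 0) = extendByZero x k := by
  by_cases hk : ∃ j : Fin n, (j : ℤ) = k
  · obtain ⟨j, rfl⟩ := hk
    simp [natCast_injective_fin.eq_iff]
  · rw [extendByZero, extend_apply' _ _ _ hk, Finset.sum_eq_zero fun j _ => if_neg ?_]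
    · rfl
    · exact fun hj => hk ⟨j, hj⟩

theorem sum_mul_eq_finsum_extendByZero (f : ℤ → ℝ) :
    ∑ j, x j * f j = ∑ᶠ k, extendByZero x k * f k := by
  let e : Fin n ↪ ℤ := ⟨fun j => j, natCast_injective_fin⟩
  rw [finsum_eq_sum_of_support_subset _ (s := Finset.univ.map e), Finset.sum_map]
  · simp [e]
  · intro k hk
    by_contra h
    refine hk ?_
    simp only [Finset.coe_map, Finset.coe_univ, Set.image_univ] at h
    show extendByZero x k * f k = 0
    rw [show extendByZero x k = 0 from extend_apply' _ _ _ h, zero_mul]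

end ExtendByZero

section ShiftMatrix

def shiftMatrix (n : ℕ) (m : ℤ) : Matrix (Fin n) (Fin n) ℝ :=
  Matrix.of fun i j => if (j : ℤ) = i + m then 1 else 0

def dirichletLaplacian (n : ℕ) (m : ℤ) : Matrix (Fin n) (Fin n) ℝ :=
  2 • shiftMatrix n 0 - shiftMatrix n m - shiftMatrix n (-m)

variable {n : ℕ} (x : Fin n → ℝ)

theorem dotProduct_shiftMatrix_mulVec (m : ℤ) :
    x ⬝ᵥ shiftMatrix n m *ᵥ x = ∑ᶠ k, extendByZero x k * extendByZero x (k + m) := by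
  have hrow : ∀ i : Fin n, (shiftMatrix n m *ᵥ x) i = extendByZero x (i + m) := fun i => by
    simp [shiftMatrix, mulVec, dotProduct, ← sum_ite_natCast_eq_extendByZero, eq_comm]
  simp only [dotProduct, hrow]
  exact sum_mul_eq_finsum_extendByZero x fun k => extendByZero x (k + m)

theorem dotProduct_dirichletLaplacian_mulVec (m : ℤ) :
    x ⬝ᵥ dirichletLaplacian n m *ᵥ x = ∑ᶠ k, (extendByZero x (k + m) - extendByZero x k) ^ 2 := by
  set v := extendByZero x
  have hsym : ∑ᶠ k, v k * v (k + -m) = ∑ᶠ k, v k * v (k + m) := by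
    rw [← finsum_comp_add_right _ m]
    simp only [add_neg_cancel_right, mul_comm]
  rw [dirichletLaplacian, sub_mulVec, sub_mulVec, smul_mulVec, dotProduct_sub, dotProduct_sub,
    dotProduct_smul, dotProduct_shiftMatrix_mulVec, dotProduct_shiftMatrix_mulVec,
    dotProduct_shiftMatrix_mulVec, hsym, finsum_sq_sub_comp_add (hasFiniteSupport_extendByZero x)]
  simp only [add_zero, ← sq, nsmul_eq_mul, Nat.cast_ofNat]
  ring

end ShiftMatrix

theorem pentadiagonal_eq_smul_dirichletLaplacian_add {n : ℕ} (k₁ k₂ : ℝ)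
    (A : Matrix (Fin n) (Fin n) ℝ)
    (hA : ∀ i j : Fin n, A i j =
      if (i : ℤ) = (j : ℤ) then 2 * (k₁ + k₂)
      else if |(i : ℤ) - (j : ℤ)| = 1 then -k₁
      else if |(i : ℤ) - (j : ℤ)| = 2 then -k₂
      else 0) :
    A = k₁ • dirichletLaplacian n 1 + k₂ • dirichletLaplacian n 2 := by
  ext i j
  simp only [hA, dirichletLaplacian, shiftMatrix, Matrix.add_apply, Matrix.smul_apply,
    Matrix.sub_apply, of_apply, smul_eq_mul, abs_eq (zero_le_one' ℤ),
    abs_eq (zero_le_two (α := ℤ))]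
  split_ifs <;> first | ring1 | (exfalso; omega)

theorem stmt_7_general {n : ℕ} (k₁ k₂ : ℝ) (hk₂ : k₂ < 0)
    (hstab : 0 < k₁ + 4 * k₂)
    (A : Matrix (Fin n) (Fin n) ℝ)
    (hA : ∀ i j : Fin n, A i j =
      if (i : ℤ) = (j : ℤ) then 2 * (k₁ + k₂)
      else if |(i : ℤ) - (j : ℤ)| = 1 then -k₁
      else if |(i : ℤ) - (j : ℤ)| = 2 then -k₂
      else 0) :
    A.PosDef := by
  rw [posDef_iff_dotProduct_mulVec]
  refine ⟨?_, fun x hx => ?_⟩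
  · ext i j
    rw [conjTranspose_apply, hA, hA, star_trivial, abs_sub_comm (j : ℤ)]
    split_ifs <;> first | rfl | omega
  · have hv := hasFiniteSupport_extendByZero x
    rw [star_trivial, pentadiagonal_eq_smul_dirichletLaplacian_add k₁ k₂ A hA, add_mulVec,
      smul_mulVec, smul_mulVec, dotProduct_add, dotProduct_smul, dotProduct_smul,
      dotProduct_dirichletLaplacian_mulVec, dotProduct_dirichletLaplacian_mulVec, smul_eq_mul,
      smul_eq_mul]
    have hD₂ := finsum_sq_sub_comp_add_two_le hv
    have hD₁ := finsum_sq_sub_comp_add_one_pos hv (extendByZero_ne_zero hx)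
    linarith [mul_le_mul_of_nonpos_left hD₂ hk₂.le, mul_pos hstab hD₁]

/-- The symmetric pentadiagonal Toeplitz matrix with diagonal `2(k₁+k₂)`,
first off-diagonals `-k₁` and second off-diagonals `-k₂` is positive definite
whenever `k₁ > 0`, `k₂ < 0` and `k₁ + 4k₂ > 0`. -/
theorem stmt_7 {n : ℕ} (k₁ k₂ : ℝ) (hk₁ : 0 < k₁) (hk₂ : k₂ < 0)
    (hstab : 0 < k₁ + 4 * k₂)
    (A : Matrix (Fin n) (Fin n) ℝ)
    (hA : ∀ i j : Fin n, A i j =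
      if (i : ℤ) = (j : ℤ) then 2 * (k₁ + k₂)
      else if |(i : ℤ) - (j : ℤ)| = 1 then -k₁
      else if |(i : ℤ) - (j : ℤ)| = 2 then -k₂
      else 0) :
    A.PosDef :=
  stmt_7_general k₁ k₂ hk₂ hstab A hA
end

section
/- Let A ∈ ℝ^{N×N} (N = 2M+1, M ≥ 1) be the symmetric pentadiagonal Toeplitz matrix with diagonal 2(1+k₂), first off-diagonals -1, second off-diagonals -k₂, with k₂ ∈ (-1/4, 0). Then (A^{-1})_{1,1} / (A^{-1})_{1,N} > 1, i.e., (A^{-1})_{1,1} > (A^{-1})_{1,N}. -/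
/-!
Let `L` be the lower shift on `Fin (n + 1)` and `D = 2 - L - Lᵀ` the Dirichlet second-difference
matrix. With `t = -k ∈ (0, 1/4)` the pentadiagonal matrix factors as
`A = D C + t e₀e₀ᵀ + t eₙeₙᵀ` with `C = (1 - 4t) + t D`. Both `D` and `C` are positive definite
with nonpositive off-diagonal entries, hence have entrywise nonnegative inverses, and the last
column of `D⁻¹` is `((i + 1) / (n + 2))ᵢ`; so `(D C)⁻¹ 0 n > 0`. A nonnegative update of a diagonal
entry of a positive definite matrix does not change the sign of the inverse entries in that row
and column (Sherman–Morrison), so `A⁻¹ 0 n > 0`. Finally `A⁻¹` is positive definite and, like `A`,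
invariant under `i ↦ n - i`; testing it on `e₀ - eₙ` gives `2 A⁻¹ 0 n < A⁻¹ 0 0 + A⁻¹ n n = 2 A⁻¹ 0 0`.
-/

namespace Fin

variable {M : Type*} [AddCommMonoid M] {n : ℕ}

theorem sum_ite_val_eq (f : Fin n → M) (a : ℕ) :
    ∑ k : Fin n, (if (k : ℕ) = a then f k else 0) = if h : a < n then f ⟨a, h⟩ else 0 := by
  split_ifs with h
  · rw [Finset.sum_eq_single ⟨a, h⟩] <;> simp +contextual [Fin.ext_iff]
  · exact Finset.sum_eq_zero fun k _ => if_neg (by omega)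

theorem sum_ite_eq_val_add (f : Fin n → M) (a c : ℕ) :
    ∑ k : Fin n, (if a = (k : ℕ) + c then f k else 0) =
      if h : c ≤ a ∧ a - c < n then f ⟨a - c, h.2⟩ else 0 := by
  have hc : ∀ k : Fin n, (a = (k : ℕ) + c) = ((k : ℕ) = a - c ∧ c ≤ a) := fun k => by
    ext; omega
  simp_rw [hc, ite_and, sum_ite_val_eq]
  by_cases hca : c ≤ a <;> simp [hca]

end Fin

namespace Matrix

variable {ι : Type*}

/-- A positive definite Z-matrix is inverse-positive: pair `M x` with the negative part `y` of `x`;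
off the diagonal `y` meets only the positive part of `x`, so `y ⬝ᵥ M *ᵥ y ≤ 0`. -/
theorem PosDef.nonneg_of_mulVec_nonneg [Fintype ι] {M : Matrix ι ι ℝ} (hM : M.PosDef)
    (hM_offDiag : ∀ i j, i ≠ j → M i j ≤ 0) {x : ι → ℝ} (hx : 0 ≤ M *ᵥ x) : 0 ≤ x := by
  set y : ι → ℝ := fun i => max (-x i) 0
  have hcross : y ⬝ᵥ (M *ᵥ (y + x)) ≤ 0 := by
    rw [dot_mulVec_eq_sum_sum]
    refine Finset.sum_nonpos fun j _ => Finset.sum_nonpos fun i _ => ?_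
    have hxj : 0 ≤ y j + x j := by simp only [y]; grind
    rcases eq_or_ne i j with rfl | hij
    · have : y i * (y i + x i) = 0 := by simp only [y]; grind
      simp only [Pi.add_apply]
      linear_combination M i i * this
    · have := mul_nonpos_of_nonneg_of_nonpos (le_max_right (-x i) 0) (hM_offDiag i j hij)
      exact mul_nonpos_of_nonpos_of_nonneg this hxj
  have hyx : 0 ≤ y ⬝ᵥ (M *ᵥ x) :=
    Finset.sum_nonneg fun i _ => mul_nonneg (le_max_right _ _) (hx i)
  have hy : y = 0 := by
    by_contra hy
    have := hM.dotProduct_mulVec_pos hy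
    rw [mulVec_add, dotProduct_add] at hcross
    simp only [star_trivial] at this
    linarith
  intro i
  have := congrFun hy i
  simp only [y, Pi.zero_apply] at this ⊢
  grind

theorem PosDef.inv_apply_nonneg [Fintype ι] [DecidableEq ι] {M : Matrix ι ι ℝ} (hM : M.PosDef)
    (hM_offDiag : ∀ i j, i ≠ j → M i j ≤ 0) (i j : ι) : 0 ≤ M⁻¹ i j := by
  have hcol : M *ᵥ (M⁻¹ *ᵥ Pi.single j 1) = Pi.single j 1 := by
    rw [mulVec_mulVec, mul_nonsing_inv _ ((isUnit_iff_isUnit_det M).mp hM.isUnit), one_mulVec]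
  have := hM.nonneg_of_mulVec_nonneg hM_offDiag (hcol ▸ Pi.single_nonneg.2 zero_le_one) i
  simpa [mulVec_single_one] using this

/-- Read off from `X + B⁻¹ * single k k s * X = B⁻¹` for `X = (B + single k k s)⁻¹`. -/
theorem inv_add_single_apply_row [Fintype ι] [DecidableEq ι] {B : Matrix ι ι ℝ}
    (hB : IsUnit B.det) {k : ι} {s : ℝ} (hBs : IsUnit (B + single k k s).det) (j : ι) :
    (B + single k k s)⁻¹ k j * (1 + s * B⁻¹ k k) = B⁻¹ k j := by
  have h : (B + single k k s)⁻¹ + B⁻¹ * single k k s * (B + single k k s)⁻¹ = B⁻¹ := by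
    calc _ = B⁻¹ * (B + single k k s) * (B + single k k s)⁻¹ := by
          rw [Matrix.mul_add, Matrix.add_mul, nonsing_inv_mul _ hB, Matrix.one_mul]
      _ = B⁻¹ := by rw [Matrix.mul_assoc, mul_nonsing_inv _ hBs, Matrix.mul_one]
  have := congrFun (congrFun h k) j
  simp only [add_apply, mul_apply, single_apply, ite_and, mul_ite, mul_zero, Finset.sum_ite_eq,
    Finset.mem_univ, ↓reduceIte, ite_mul, zero_mul] at this
  linear_combination this

theorem inv_add_single_apply_col [Fintype ι] [DecidableEq ι] {B : Matrix ι ι ℝ}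
    (hB : IsUnit B.det) {k : ι} {s : ℝ} (hBs : IsUnit (B + single k k s).det) (i : ι) :
    (B + single k k s)⁻¹ i k * (1 + s * B⁻¹ k k) = B⁻¹ i k := by
  have h : (B + single k k s)⁻¹ + (B + single k k s)⁻¹ * single k k s * B⁻¹ = B⁻¹ := by
    calc _ = (B + single k k s)⁻¹ * (B + single k k s) * B⁻¹ := by
          rw [Matrix.mul_add, Matrix.add_mul, mul_nonsing_inv_cancel_right _ _ hB]
      _ = B⁻¹ := by rw [nonsing_inv_mul _ hBs, Matrix.one_mul]
  have := congrFun (congrFun h i) k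
  simp only [Matrix.mul_assoc, add_apply, mul_apply, single_apply, ite_and, ite_mul, zero_mul,
    Finset.sum_ite_irrel, Finset.sum_ite_eq, Finset.mem_univ, ↓reduceIte, Finset.sum_const_zero,
    mul_ite, mul_zero] at this
  linear_combination this

theorem PosDef.add_single [DecidableEq ι] {B : Matrix ι ι ℝ} (hB : B.PosDef) (k : ι) {s : ℝ}
    (hs : 0 ≤ s) : (B + single k k s).PosDef :=
  hB.add_posSemidef (diagonal_single k s ▸ PosSemidef.diagonal (Pi.single_nonneg.2 hs))

theorem PosDef.inv_add_single_apply_pos [Fintype ι] [DecidableEq ι] {B : Matrix ι ι ℝ}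
    (hB : B.PosDef) {k : ι} {s : ℝ} (hs : 0 ≤ s) {i j : ι} (hk : k = i ∨ k = j)
    (h : 0 < B⁻¹ i j) : 0 < (B + single k k s)⁻¹ i j := by
  have hdet := (isUnit_iff_isUnit_det B).mp hB.isUnit
  have hdet' := (isUnit_iff_isUnit_det _).mp (hB.add_single k hs).isUnit
  have hfactor : 0 < 1 + s * B⁻¹ k k := by
    have := hB.inv.diag_pos (i := k)
    positivity
  refine (mul_pos_iff_of_pos_right hfactor).mp ?_
  rcases hk with rfl | rfl
  · rwa [inv_add_single_apply_row hdet hdet']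
  · rwa [inv_add_single_apply_col hdet hdet']

theorem PosDef.apply_add_apply_lt [Fintype ι] [DecidableEq ι] {M : Matrix ι ι ℝ}
    (hM : M.PosDef) {i j : ι} (hij : i ≠ j) : M i j + M j i < M i i + M j j := by
  have hx : Pi.single i 1 - Pi.single j 1 ≠ (0 : ι → ℝ) := by
    intro h
    simpa [hij] using congrFun h i
  have := hM.dotProduct_mulVec_pos hx
  simp only [star_trivial, mulVec_sub, mulVec_single_one, dotProduct_sub, sub_dotProduct,
    single_dotProduct, col_apply, one_mul] at this
  linarith

theorem inv_submatrix_eq_of_submatrix_eq {α : Type*} [CommRing α] [Fintype ι] [DecidableEq ι]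
    {A : Matrix ι ι α} (e : ι ≃ ι) (hA : A.submatrix e e = A) : A⁻¹.submatrix e e = A⁻¹ := by
  rw [← inv_submatrix_equiv, hA]

def lowerShift (n : ℕ) : Matrix (Fin (n + 1)) (Fin (n + 1)) ℝ :=
  of fun i j => if (i : ℕ) = j + 1 then 1 else 0

def dirichletLaplacian (n : ℕ) : Matrix (Fin (n + 1)) (Fin (n + 1)) ℝ :=
  (2 : ℝ) • 1 - lowerShift n - (lowerShift n)ᵀ

local notation "L" => lowerShift
local notation "D" => dirichletLaplacian

variable {n : ℕ}

theorem lowerShift_mul_transpose : L n * (L n)ᵀ = 1 - single 0 0 1 := by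
  ext i j
  simp only [lowerShift, mul_apply, transpose_apply, of_apply, ite_mul, one_mul, zero_mul,
    Fin.sum_ite_eq_val_add]
  simp only [sub_apply, one_apply, single_apply, Fin.ext_iff, Fin.val_zero]
  split_ifs <;> first | rfl | omega | norm_num

theorem transpose_mul_lowerShift :
    (L n)ᵀ * L n = 1 - single (Fin.last n) (Fin.last n) 1 := by
  ext i j
  simp only [lowerShift, mul_apply, transpose_apply, of_apply, ite_mul, one_mul, zero_mul,
    Fin.sum_ite_val_eq]
  simp only [sub_apply, one_apply, single_apply, Fin.ext_iff, Fin.val_last]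
  split_ifs <;> first | rfl | omega | norm_num

theorem lowerShift_mul_self_apply (i j : Fin (n + 1)) :
    (L n * L n) i j = if (i : ℕ) = j + 2 then 1 else 0 := by
  simp only [lowerShift, mul_apply, of_apply, ite_mul, one_mul, zero_mul, Fin.sum_ite_eq_val_add]
  split_ifs <;> first | rfl | omega

theorem det_one_sub_lowerShift : (1 - L n).det = 1 := by
  rw [det_of_isLowerTriangular]
  · simp [lowerShift]
  · intro i j hij
    have : (i : ℕ) < j := hij
    simp only [lowerShift, sub_apply, one_apply, of_apply, Fin.ext_iff]
    rw [if_neg (by omega), if_neg (by omega), sub_zero]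

theorem dirichletLaplacian_eq_mul_transpose_add :
    D n = (1 - L n) * (1 - L n)ᵀ + single 0 0 1 := by
  rw [transpose_sub, transpose_one, Matrix.sub_mul, Matrix.mul_sub, Matrix.mul_sub,
    lowerShift_mul_transpose, dirichletLaplacian]
  simp only [Matrix.one_mul, Matrix.mul_one]
  module

theorem posDef_dirichletLaplacian : (D n).PosDef := by
  have hunit : IsUnit (1 - L n) := by
    rw [isUnit_iff_isUnit_det, det_one_sub_lowerShift]
    exact isUnit_one
  rw [dirichletLaplacian_eq_mul_transpose_add]
  exact (PosDef.mul_conjTranspose_self _ (vecMul_injective_of_isUnit hunit)).add_single 0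
    zero_le_one

theorem dirichletLaplacian_mul_self :
    D n * D n = (6 : ℝ) • 1 - (4 : ℝ) • (L n + (L n)ᵀ) + (L n * L n + (L n)ᵀ * (L n)ᵀ)
      - single 0 0 1 - single (Fin.last n) (Fin.last n) 1 := by
  simp only [dirichletLaplacian, Matrix.sub_mul, Matrix.mul_sub, Matrix.smul_mul, Matrix.mul_smul,
    Matrix.one_mul, Matrix.mul_one, lowerShift_mul_transpose, transpose_mul_lowerShift]
  module

theorem dirichletLaplacian_apply_nonpos {i j : Fin (n + 1)} (hij : i ≠ j) : D n i j ≤ 0 := by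
  simp only [dirichletLaplacian, lowerShift, sub_apply, smul_apply, one_apply_ne hij, smul_eq_mul,
    mul_zero, of_apply, zero_sub, transpose_apply]
  split_ifs <;> norm_num

theorem dirichletLaplacian_mulVec_ramp :
    D n *ᵥ (fun k => (k : ℝ) + 1) = Pi.single (Fin.last n) ((n : ℝ) + 2) := by
  ext i
  simp only [dirichletLaplacian, sub_mulVec, smul_mulVec, one_mulVec, Pi.sub_apply, Pi.smul_apply]
  simp only [mulVec, dotProduct, lowerShift, transpose_apply, of_apply, ite_mul, one_mul, zero_mul,
    Fin.sum_ite_eq_val_add, Fin.sum_ite_val_eq, Pi.single_apply, Fin.ext_iff, Fin.val_last]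
  obtain ⟨_ | m, hm⟩ := i <;> simp only [smul_eq_mul] <;>
    split_ifs <;> first | (exfalso; omega) | (subst_vars; push_cast; ring)

theorem inv_dirichletLaplacian_apply_last_pos (i : Fin (n + 1)) :
    0 < (D n)⁻¹ i (Fin.last n) := by
  have h := congrArg ((D n)⁻¹ *ᵥ ·) (dirichletLaplacian_mulVec_ramp (n := n))
  simp only [mulVec_mulVec, one_mulVec,
    nonsing_inv_mul _ ((isUnit_iff_isUnit_det _).mp posDef_dirichletLaplacian.isUnit)] at h
  have hi := congrFun h i
  simp only [mulVec, dotProduct_single] at hi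
  have hn : (0 : ℝ) < n + 2 := by positivity
  exact (mul_pos_iff_of_pos_right hn).mp (by rw [← hi]; positivity)

def pentadiagonal (n : ℕ) (k : ℝ) : Matrix (Fin (n + 1)) (Fin (n + 1)) ℝ :=
  of fun i j =>
    if (i : ℤ) = (j : ℤ) then 2 * (1 + k)
    else if |(i : ℤ) - (j : ℤ)| = 1 then -1
    else if |(i : ℤ) - (j : ℤ)| = 2 then -k
    else 0

theorem pentadiagonal_eq_lowerShift (k : ℝ) :
    pentadiagonal n k =
      (2 * (1 + k)) • 1 - (L n + (L n)ᵀ) - k • (L n * L n + (L n)ᵀ * (L n)ᵀ) := by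
  ext i j
  have hLL' : ((L n)ᵀ * (L n)ᵀ) i j = if (j : ℕ) = i + 2 then 1 else 0 := by
    rw [← transpose_mul, transpose_apply, lowerShift_mul_self_apply]
  simp only [sub_apply, add_apply, smul_apply, lowerShift_mul_self_apply, hLL']
  simp only [pentadiagonal, lowerShift, of_apply, transpose_apply, one_apply, Fin.ext_iff,
    smul_eq_mul, abs_eq (zero_le_one' ℤ), abs_eq (zero_le_two (α := ℤ))]
  split_ifs <;> first | (exfalso; omega) | ring

theorem pentadiagonal_eq_dirichletLaplacian_mul_add (k : ℝ) :
    pentadiagonal n k = D n * ((1 + 4 * k) • 1 - k • D n)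
      + single 0 0 (-k) + single (Fin.last n) (Fin.last n) (-k) := by
  have hsingle (i : Fin (n + 1)) : single i i (-k) = (-k) • single i i 1 := by
    rw [smul_single, smul_eq_mul, mul_one]
  rw [Matrix.mul_sub, Matrix.mul_smul, Matrix.mul_smul, Matrix.mul_one,
    dirichletLaplacian_mul_self, pentadiagonal_eq_lowerShift, hsingle, hsingle, dirichletLaplacian]
  module

theorem pentadiagonal_apply_rev (k : ℝ) (i j : Fin (n + 1)) :
    pentadiagonal n k i.rev j.rev = pentadiagonal n k i j := by
  have hi : ((i.rev : ℕ) : ℤ) = n - i := by rw [Fin.val_rev]; omega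
  have hj : ((j.rev : ℕ) : ℤ) = n - j := by rw [Fin.val_rev]; omega
  simp only [pentadiagonal, of_apply, hi, hj, show (n - i : ℤ) - (n - j) = j - i by ring,
    abs_sub_comm (j : ℤ), sub_right_inj]

section PentadiagonalInverse

variable {k : ℝ} (hk : -1 / 4 < k) (hk0 : k < 0)
include hk hk0

theorem posDef_smul_one_sub_smul_dirichletLaplacian : ((1 + 4 * k) • 1 - k • D n).PosDef := by
  rw [sub_eq_add_neg, ← neg_smul]
  exact (PosDef.one.smul (by linarith)).add (posDef_dirichletLaplacian.smul (by linarith))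

theorem posDef_dirichletLaplacian_mul : (D n * ((1 + 4 * k) • 1 - k • D n)).PosDef := by
  have h : D n * ((1 + 4 * k) • 1 - k • D n) = (1 + 4 * k) • D n + (-k) • ((D n)ᴴ * D n) := by
    rw [(posDef_dirichletLaplacian (n := n)).isHermitian.eq]
    simp only [Matrix.mul_sub, Matrix.mul_smul, Matrix.mul_one, neg_smul]
    abel
  rw [h]
  exact (posDef_dirichletLaplacian.smul (by linarith)).add_posSemidef
    ((posSemidef_conjTranspose_mul_self _).smul (by linarith))

theorem inv_dirichletLaplacian_mul_apply_zero_last_pos :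
    0 < (D n * ((1 + 4 * k) • 1 - k • D n))⁻¹ 0 (Fin.last n) := by
  have hC := posDef_smul_one_sub_smul_dirichletLaplacian (n := n) hk hk0
  have hC_offDiag : ∀ i j, i ≠ j → ((1 + 4 * k) • 1 - k • D n) i j ≤ 0 := fun i j hij => by
    have := dirichletLaplacian_apply_nonpos hij
    simp only [sub_apply, smul_apply, one_apply_ne hij, smul_eq_mul]
    nlinarith
  rw [mul_inv_rev, mul_apply]
  refine Finset.sum_pos' (fun i _ => ?_) ⟨0, Finset.mem_univ _, ?_⟩
  · exact mul_nonneg (hC.inv_apply_nonneg hC_offDiag 0 i)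
      (inv_dirichletLaplacian_apply_last_pos i).le
  · exact mul_pos hC.inv.diag_pos (inv_dirichletLaplacian_apply_last_pos 0)

theorem posDef_pentadiagonal : (pentadiagonal n k).PosDef := by
  rw [pentadiagonal_eq_dirichletLaplacian_mul_add]
  exact ((posDef_dirichletLaplacian_mul hk hk0).add_single _ (by linarith)).add_single _
    (by linarith)

theorem inv_pentadiagonal_apply_zero_last_pos : 0 < (pentadiagonal n k)⁻¹ 0 (Fin.last n) := by
  have hP := posDef_dirichletLaplacian_mul (n := n) hk hk0
  rw [pentadiagonal_eq_dirichletLaplacian_mul_add]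
  refine (hP.add_single 0 (by linarith)).inv_add_single_apply_pos (by linarith) (.inr rfl) ?_
  exact hP.inv_add_single_apply_pos (by linarith) (.inl rfl)
    (inv_dirichletLaplacian_mul_apply_zero_last_pos hk hk0)

theorem inv_pentadiagonal_apply_zero_last_lt (hn : 1 ≤ n) :
    (pentadiagonal n k)⁻¹ 0 (Fin.last n) < (pentadiagonal n k)⁻¹ 0 0 := by
  have hA := (posDef_pentadiagonal (n := n) hk hk0).inv
  have hrev : (pentadiagonal n k)⁻¹ (Fin.last n) (Fin.last n) = (pentadiagonal n k)⁻¹ 0 0 := by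
    have h := inv_submatrix_eq_of_submatrix_eq (A := pentadiagonal n k) Fin.revPerm
      (ext fun i j => pentadiagonal_apply_rev k i j)
    simpa using congrFun (congrFun h 0) 0
  have hsymm := hA.isHermitian.apply 0 (Fin.last n)
  have hlt := hA.apply_add_apply_lt (i := 0) (j := Fin.last n) (by simp [Fin.ext_iff]; omega)
  simp only [star_trivial] at hsymm
  linarith

end PentadiagonalInverse

end Matrix

open Matrix in
/-- For the symmetric pentadiagonal Toeplitz matrix of size `N = 2M+1` with
diagonal `2(1+k₂)`, first off-diagonals `-1`, second off-diagonals `-k₂`,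
with `k₂ ∈ (-1/4, 0)`: `(A⁻¹)₁,₁ / (A⁻¹)₁,N > 1`, i.e. `(A⁻¹)₁,₁ > (A⁻¹)₁,N`. -/
theorem stmt_9 (M : ℕ) (hM : 1 ≤ M) (k₂ : ℝ) (hk₂l : -1/4 < k₂) (hk₂u : k₂ < 0)
    (A : Matrix (Fin (2 * M + 1)) (Fin (2 * M + 1)) ℝ)
    (hA : ∀ i j : Fin (2 * M + 1), A i j =
      if (i : ℤ) = (j : ℤ) then 2 * (1 + k₂)
      else if |(i : ℤ) - (j : ℤ)| = 1 then -1
      else if |(i : ℤ) - (j : ℤ)| = 2 then -k₂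
      else 0) :
    1 < A⁻¹ 0 0 / A⁻¹ 0 (Fin.last (2 * M)) ∧
      A⁻¹ 0 (Fin.last (2 * M)) < A⁻¹ 0 0 := by
  obtain rfl : A = pentadiagonal (2 * M) k₂ := ext hA
  have hpos := inv_pentadiagonal_apply_zero_last_pos (n := 2 * M) hk₂l hk₂u
  have hlt := inv_pentadiagonal_apply_zero_last_lt (n := 2 * M) hk₂l hk₂u (by omega)
  exact ⟨(one_lt_div hpos).mpr hlt, hlt⟩
end

section
/- Define a sequence (U_i) for i ≥ 1 by U₁ = -1, U₂ = -2k k₂ - 1, U₃ = (4k k₂ + k₂² + 1)/(-2k k₂ - 1), and for i ≥ 4, U_i = -1 + 2k k₂/U_{i-1} - k₂²/(U_{i-1} U_{i-2}) - k₂⁴/(U_{i-1} U_{i-2} U_{i-3}), where k = 1 + k₂. Then in the limiting case k₂ = -1/4, U_i = -(1 + 3/i)/4 for all i ≥ 1. -/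
set_option maxHeartbeats 1000000


/-- For the recursion `U₁ = -1`, `U₂ = -2kk₂ - 1`,
`U₃ = (4kk₂ + k₂² + 1)/(-2kk₂ - 1)`,
`Uᵢ = -1 + 2kk₂/Uᵢ₋₁ - k₂²/(Uᵢ₋₁Uᵢ₋₂) - k₂⁴/(Uᵢ₋₁Uᵢ₋₂Uᵢ₋₃)` (`i ≥ 4`),
with `k = 1 + k₂`, in the limiting case `k₂ = -1/4` one has
`Uᵢ = -(1 + 3/i)/4` for all `i ≥ 1`. -/
theorem stmt_15 (k₂ k : ℝ) (hk₂ : k₂ = -1/4) (hk : k = 1 + k₂)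
    (U : ℕ → ℝ)
    (hU1 : U 1 = -1)
    (hU2 : U 2 = -2 * k * k₂ - 1)
    (hU3 : U 3 = (4 * k * k₂ + k₂ ^ 2 + 1) / (-2 * k * k₂ - 1))
    (hrec : ∀ i : ℕ, 4 ≤ i →
      U i = -1 + 2 * k * k₂ / U (i - 1) - k₂ ^ 2 / (U (i - 1) * U (i - 2)) -
        k₂ ^ 4 / (U (i - 1) * U (i - 2) * U (i - 3))) :
    ∀ i : ℕ, 1 ≤ i → U i = -(1 + 3 / (i : ℝ)) / 4 := by
  subst hk₂ hk
  intro i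
  induction i using Nat.strong_induction_on with
  | _ i ih =>
    intro hi
    match i, hi with
    | 1, _ => rw [hU1]; norm_num
    | 2, _ => rw [hU2]; norm_num
    | 3, _ => rw [hU3]; norm_num
    | (n+4), _ =>
      have h1 := ih (n+3) (by omega) (by omega)
      have h2 := ih (n+2) (by omega) (by omega)
      have h3 := ih (n+1) (by omega) (by omega)
      have hr := hrec (n+4) (by omega)
      have e1 : n+4-1 = n+3 := rfl
      have e2 : n+4-2 = n+2 := rfl
      have e3 : n+4-3 = n+1 := rfl
      have h1' : U (n+3) = -(((n:ℝ)+6)) / (4*((n:ℝ)+3)) := by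
        rw [h1]; push_cast
        have : ((n:ℝ)+3) ≠ 0 := by positivity
        field_simp; ring
      have h2' : U (n+2) = -(((n:ℝ)+5)) / (4*((n:ℝ)+2)) := by
        rw [h2]; push_cast
        have : ((n:ℝ)+2) ≠ 0 := by positivity
        field_simp; ring
      have h3' : U (n+1) = -(((n:ℝ)+4)) / (4*((n:ℝ)+1)) := by
        rw [h3]; push_cast
        have : ((n:ℝ)+1) ≠ 0 := by positivity
        field_simp; ring
      rw [e1, e2, e3, h1', h2', h3'] at hr
      rw [hr]
      have hn1 : (n:ℝ)+1 > 0 := by positivity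
      have hn2 : (n:ℝ)+2 > 0 := by positivity
      have hn3 : (n:ℝ)+3 > 0 := by positivity
      have hn4 : (n:ℝ)+4 > 0 := by positivity
      have d1 : ((n:ℝ)+4) ≠ 0 := by positivity
      have d2 : ((n:ℝ)+5) ≠ 0 := by positivity
      have d3 : ((n:ℝ)+6) ≠ 0 := by positivity
      have hn0 : (0:ℝ) ≤ (n:ℝ) := Nat.cast_nonneg n
      have hA : (-96 - (n:ℝ) * 16) ≠ 0 := by nlinarith
      have hB : (480 + (n:ℝ) * 176 + (n:ℝ) ^ 2 * 16) ≠ 0 := by positivity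
      have hC : (-30720 - (n:ℝ) * 18944 + (-((n:ℝ) ^ 2 * 3840) - (n:ℝ) ^ 3 * 256)) ≠ 0 := by
        nlinarith [pow_nonneg hn0 2, pow_nonneg hn0 3]
      have d4 : ((n:ℝ)+1) ≠ 0 := by positivity
      have d5 : ((n:ℝ)+2) ≠ 0 := by positivity
      have d6 : ((n:ℝ)+3) ≠ 0 := by positivity
      have d7 : (-((n:ℝ)+6)) ≠ 0 := neg_ne_zero.mpr d3
      have d8 : (-((n:ℝ)+5)) ≠ 0 := neg_ne_zero.mpr d2
      have d9 : (-((n:ℝ)+4)) ≠ 0 := neg_ne_zero.mpr d1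
      push_cast
      simp only [div_mul_div_comm, div_div_eq_mul_div, div_div_div_eq]
      rw [add_div' _ _ _ d7, div_sub_div _ _ d7 (mul_ne_zero d7 d8),
        div_sub_div _ _ (mul_ne_zero d7 (mul_ne_zero d7 d8))
          (mul_ne_zero (mul_ne_zero d7 d8) d9),
        add_div' _ _ _ d1, ← neg_div, div_div,
        div_eq_div_iff
          (mul_ne_zero (mul_ne_zero d7 (mul_ne_zero d7 d8))
            (mul_ne_zero (mul_ne_zero d7 d8) d9)) (by positivity)]
      ring
end
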